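/- Let G be the threshold graph with creation sequence (0, 0, 1, 0^{k}, 1), where k ≥ 1. Then q(G) = 3. -/

import Mathlib

open Matrix BigOperators

/-- The threshold graph on `Fin n` given by a creation sequence `b`:
for `i < j`, vertices `i` and `j` are adjacent iff `b j = true`. -/
def ThresholdGraph {n : ℕ} (b : Fin n → Bool) : SimpleGraph (Fin n) where
  Adj i j := i ≠ j ∧ ((i < j ∧ b j = true) ∨ (j < i ∧ b i = true))
  symm := ⟨fun _ _ h => ⟨h.1.symm, h.2.symm⟩⟩
  loopless := ⟨fun _ h => h.1 rfl⟩

/-- The threshold graph whose creation sequence is given by a list of booleans. -/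
def thresholdOfList (L : List Bool) : SimpleGraph (Fin L.length) where
  Adj i j := i ≠ j ∧ ((i < j ∧ L.get j = true) ∨ (j < i ∧ L.get i = true))
  symm := ⟨fun _ _ h => ⟨h.1.symm, h.2.symm⟩⟩
  loopless := ⟨fun _ h => h.1 rfl⟩

/-- `S(G)`: real symmetric matrices whose off-diagonal nonzero pattern is given by `G`. -/
def SMat {n : ℕ} (G : SimpleGraph (Fin n)) : Set (Matrix (Fin n) (Fin n) ℝ) :=
  {A | A.IsSymm ∧ ∀ i j : Fin n, i ≠ j → (A i j ≠ 0 ↔ G.Adj i j)}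

/-- The number of distinct (real) eigenvalues of a matrix. -/
noncomputable def numEig {n : ℕ} (A : Matrix (Fin n) (Fin n) ℝ) : ℕ :=
  (spectrum ℝ A).ncard

/-- `q(G)`: the minimum number of distinct eigenvalues over matrices in `S(G)`. -/
noncomputable def qGraph {n : ℕ} (G : SimpleGraph (Fin n)) : ℕ :=
  sInf (numEig '' SMat G)

/-!
Lower bound: the vertices `0` and `3` are non-adjacent and `k + 3` is their only common
neighbour, so `(A * A) 0 3 = A 0 (k + 3) * A (k + 3) 3 ≠ 0` for every `A ∈ S(G)`. A symmetric
matrix whose eigenvalues lie in `{a, b}` satisfies `(A - a) (A - b) = 0`, so `(A * A) i j = 0`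
whenever `i ≠ j` and `A i j = 0`; hence `q(G) ≥ 3`.

Upper bound: a matrix that is constant on the blocks `{0}, {1}, {2}, {3, …, k + 2}, {k + 3}`,
with block values `C`, squares to the block matrix of `C Δ C`, where `Δ` is the diagonal matrix
of block sizes. An explicit `C` with `C Δ C Δ C = μ² C` yields `B ∈ S(G)` with `B³ = μ² B`, so
the eigenvalues of `B` lie in `{0, μ, -μ}`.
-/

open Finset Polynomial

theorem spectrum.isRoot_of_aeval_eq_zero {𝕜 A : Type*} [Field 𝕜] [Ring A] [Algebra 𝕜 A]
    [Nontrivial A] {a : A} {p : 𝕜[X]} (hp : aeval a p = 0) {x : 𝕜} (hx : x ∈ spectrum 𝕜 a) :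
    p.IsRoot x := by
  simpa [hp, spectrum.zero_eq] using spectrum.subset_polynomial_aeval a p ⟨x, hx, rfl⟩

theorem spectrum_subset_of_mul_mul_eq_smul {𝕜 A : Type*} [Field 𝕜] [Ring A] [Algebra 𝕜 A]
    [Nontrivial A] {a : A} {μ : 𝕜} (h : a * a * a = μ ^ 2 • a) :
    spectrum 𝕜 a ⊆ {0, μ, -μ} := by
  intro x hx
  have hp : aeval a (X ^ 3 - C (μ ^ 2) * X) = 0 := by
    rw [map_sub, map_mul, map_pow, aeval_X, aeval_C, Algebra.algebraMap_eq_smul_one,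
      smul_mul_assoc, one_mul, pow_three, ← mul_assoc, h, sub_self]
  have hx3 := spectrum.isRoot_of_aeval_eq_zero hp hx
  simp only [IsRoot.def, eval_sub, eval_pow, eval_mul, eval_C, eval_X] at hx3
  have hfactor : x * ((x - μ) * (x + μ)) = 0 := by linear_combination hx3
  rcases mul_eq_zero.1 hfactor with h0 | h0
  · exact Or.inl h0
  rcases mul_eq_zero.1 h0 with h1 | h1
  · exact Or.inr (Or.inl (sub_eq_zero.1 h1))
  · exact Or.inr (Or.inr (eq_neg_of_add_eq_zero_left h1))

section Hermitian

variable {n 𝕜 : Type*} [Fintype n] [DecidableEq n] [RCLike 𝕜] {A : Matrix n n 𝕜}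

theorem Matrix.IsHermitian.aeval_eq_zero (hA : A.IsHermitian) {p : ℝ[X]}
    (hp : ∀ x ∈ spectrum ℝ A, p.eval x = 0) : aeval A p = 0 := by
  rw [← cfc_polynomial p A hA.isSelfAdjoint, cfc_congr (g := 0) hp, cfc_zero]

theorem Matrix.IsHermitian.mul_self_apply_eq_zero (hA : A.IsHermitian) {a b : ℝ}
    (hs : spectrum ℝ A ⊆ {a, b}) {i j : n} (hij : i ≠ j) (hA0 : A i j = 0) :
    (A * A) i j = 0 := by
  have hq : aeval A ((X - C a) * (X - C b)) = 0 :=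
    hA.aeval_eq_zero fun x hx => by rcases hs hx with rfl | rfl <;> simp
  simpa [Algebra.algebraMap_eq_smul_one, sub_mul, mul_sub, hA0, Matrix.one_apply_ne hij]
    using congrFun (congrFun hq i) j

end Hermitian

theorem Set.exists_subset_pair_of_ncard_le_two {α : Type*} [Nonempty α] {s : Set α}
    (hs : s.Finite) (h : s.ncard ≤ 2) : ∃ a b, s ⊆ {a, b} := by
  rcases s.eq_empty_or_nonempty with rfl | ⟨a, ha⟩
  · exact ⟨Classical.arbitrary α, Classical.arbitrary α, Set.empty_subset _⟩
  have hdiff : (s \ {a}).ncard ≤ 1 := by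
    have := Set.ncard_sdiff_singleton_add_one ha hs
    omega
  obtain ⟨b, hb⟩ := (Set.ncard_le_one_iff_subset_singleton hs.sdiff).1 hdiff
  refine ⟨a, b, fun x hx => ?_⟩
  by_cases hxa : x = a
  · exact Or.inl hxa
  · exact Or.inr (hb ⟨hx, hxa⟩)

theorem three_le_numEig_of_unique_common_neighbor {n : ℕ} {G : SimpleGraph (Fin n)}
    {A : Matrix (Fin n) (Fin n) ℝ} (hA : A ∈ SMat G) {i j w : Fin n} (hij : i ≠ j)
    (hnadj : ¬G.Adj i j) (hiw : G.Adj i w) (hwj : G.Adj w j)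
    (huniq : ∀ t, G.Adj i t → G.Adj t j → t = w) : 3 ≤ numEig A := by
  have hzero : ∀ {x y}, x ≠ y → ¬G.Adj x y → A x y = 0 := fun hxy h =>
    not_not.1 (mt (hA.2 _ _ hxy).1 h)
  have hsq : (A * A) i j = A i w * A w j := by
    refine Finset.sum_eq_single w (fun t _ htw => ?_) (absurd (Finset.mem_univ w))
    by_cases hit : G.Adj i t
    · by_cases htj : G.Adj t j
      · exact absurd (huniq t hit htj) htw
      · obtain rfl | hne := eq_or_ne t j
        · simp [hzero hij hnadj]
        · simp [hzero hne htj]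
    · obtain rfl | hne := eq_or_ne i t
      · simp [hzero hij hnadj]
      · simp [hzero hne hit]
  by_contra! hlt
  obtain ⟨a, b, hs⟩ := Set.exists_subset_pair_of_ncard_le_two (Matrix.finite_spectrum A)
    (Nat.le_of_lt_succ hlt)
  have hherm : A.IsHermitian := Matrix.isHermitian_iff_isSymm.2 hA.1
  have hsq0 := hherm.mul_self_apply_eq_zero hs hij (hzero hij hnadj)
  rw [hsq] at hsq0
  exact mul_ne_zero ((hA.2 _ _ hiw.ne).2 hiw) ((hA.2 _ _ hwj.ne).2 hwj) hsq0

theorem Matrix.submatrix_mul_submatrix_self {ι κ R : Type*} [Fintype ι] [Fintype κ]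
    [DecidableEq κ] [Semiring R] (f : ι → κ) (C D : Matrix κ κ R) :
    C.submatrix f f * D.submatrix f f
      = (C * Matrix.diagonal (fun c => (#{i | f i = c} : R)) * D).submatrix f f := by
  ext i j
  simp only [Matrix.mul_apply, Matrix.submatrix_apply]
  rw [← Finset.sum_fiberwise Finset.univ f]
  refine Finset.sum_congr rfl fun c _ => ?_
  rw [Finset.sum_congr rfl fun t ht => by rw [(Finset.mem_filter.1 ht).2], Finset.sum_const,
    nsmul_eq_mul, ← Matrix.mul_apply, Matrix.mul_diagonal, ← Nat.cast_comm, mul_assoc]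

section ThresholdWitness

variable (k : ℕ)

def vertexClass (m : ℕ) : Fin 5 :=
  if m = 0 then 0 else if m = 1 then 1 else if m = 2 then 2 else if m < k + 3 then 3 else 4

theorem vertexClass_cases {m : ℕ} (hm : m < k + 4) :
    (m = 0 ∧ vertexClass k m = 0) ∨ (m = 1 ∧ vertexClass k m = 1) ∨
      (m = 2 ∧ vertexClass k m = 2) ∨ (3 ≤ m ∧ m < k + 3 ∧ vertexClass k m = 3) ∨
      (m = k + 3 ∧ vertexClass k m = 4) := by
  unfold vertexClass
  split_ifs <;> simp <;> omega

theorem card_vertexClass_eq (c : Fin 5) :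
    #{i : Fin (k + 4) | vertexClass k i = c} = ![1, 1, 1, k, 1] c := by
  have key : ∀ s : Finset ℕ, (∀ m, m ∈ s ↔ m < k + 4 ∧ vertexClass k m = c) →
      #{i : Fin (k + 4) | vertexClass k i = c} = #s := fun s hs => by
    rw [← Finset.card_map Fin.valEmbedding]
    congr 1
    ext m
    simp only [Finset.mem_map, Finset.mem_filter, Finset.mem_univ, true_and, hs]
    exact ⟨fun ⟨i, hi, him⟩ => him ▸ ⟨i.2, hi⟩, fun ⟨hm, hc⟩ => ⟨⟨m, hm⟩, hc, rfl⟩⟩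
  fin_cases c
  · exact key {0} fun m => by unfold vertexClass; split_ifs <;> simp <;> omega
  · exact key {1} fun m => by unfold vertexClass; split_ifs <;> simp <;> omega
  · exact key {2} fun m => by unfold vertexClass; split_ifs <;> simp <;> omega
  · exact (key (Ico 3 (k + 3)) fun m => by
      unfold vertexClass; split_ifs <;> simp <;> omega).trans (Nat.card_Ico _ _)
  · exact key {k + 3} fun m => by unfold vertexClass; split_ifs <;> simp <;> omega

/-- This is `(4k + 1) (p qᵀ + q pᵀ) / 6 + u e₄ᵀ + e₄ uᵀ` with `p = (3, -3, 0)`, `q = (1, 1, -4)`,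
`u = (2 (4k - 1), 2 (4k - 1), 4k - 1, 12)`. For the inner product weighted by the block sizes
`(1, 1, 1, k, 1)`, the vectors `p, q, u, e₄` are orthogonal, `|p|² = |q|² = 18` and
`|u| = 3 (4k + 1)`, so the nonzero eigenvalues of `C Δ` are `±3 (4k + 1)`. -/
def classMatrix : Matrix (Fin 5) (Fin 5) ℝ :=
  let a : ℝ := 4 * k + 1
  let b : ℝ := 4 * k - 1
  !![a, 0, -2 * a, 0, 2 * b;
     0, -a, 2 * a, 0, 2 * b;
     -2 * a, 2 * a, 0, 0, b;
     0, 0, 0, 0, 12;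
     2 * b, 2 * b, b, 12, 0]

theorem classMatrix_isSymm : (classMatrix k).IsSymm :=
  Matrix.IsSymm.ext fun i j => by fin_cases i <;> fin_cases j <;> rfl

theorem classMatrix_cube :
    classMatrix k * Matrix.diagonal ![1, 1, 1, (k : ℝ), 1] * classMatrix k
      * Matrix.diagonal ![1, 1, 1, (k : ℝ), 1] * classMatrix k
      = (3 * (4 * k + 1) : ℝ) ^ 2 • classMatrix k := by
  ext i j
  simp only [Matrix.mul_apply, Fin.sum_univ_five, Matrix.diagonal_apply, Matrix.smul_apply,
    smul_eq_mul]
  fin_cases i <;> fin_cases j <;> simp [classMatrix] <;> ring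

def witnessMatrix : Matrix (Fin (k + 4)) (Fin (k + 4)) ℝ :=
  (classMatrix k).submatrix (vertexClass k ·) (vertexClass k ·)

theorem witnessMatrix_cube :
    witnessMatrix k * witnessMatrix k * witnessMatrix k
      = (3 * (4 * k + 1) : ℝ) ^ 2 • witnessMatrix k := by
  have hΔ : (fun c => (#{i : Fin (k + 4) | vertexClass k i = c} : ℝ))
      = ![1, 1, 1, (k : ℝ), 1] := by
    ext c
    rw [card_vertexClass_eq]
    fin_cases c <;> simp
  rw [witnessMatrix, Matrix.submatrix_mul_submatrix_self, hΔ, Matrix.submatrix_mul_submatrix_self,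
    hΔ, classMatrix_cube, Matrix.submatrix_smul]
  rfl

theorem numEig_witnessMatrix_le : numEig (witnessMatrix k) ≤ 3 := by
  have hs := spectrum_subset_of_mul_mul_eq_smul (witnessMatrix_cube k)
  calc numEig (witnessMatrix k)
      ≤ (({0, (3 * (4 * k + 1) : ℝ), -(3 * (4 * k + 1) : ℝ)} : Finset ℝ) : Set ℝ).ncard :=
        Set.ncard_le_ncard (by simpa using hs) (Finset.finite_toSet _)
    _ ≤ 3 := by rw [Set.ncard_coe_finset]; exact Finset.card_le_three

variable {k} {b : Fin (k + 4) → Bool}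

theorem witnessMatrix_mem_SMat (hb : ∀ i, b i = true ↔ (i : ℕ) = 2 ∨ (i : ℕ) = k + 3) :
    witnessMatrix k ∈ SMat (ThresholdGraph b) := by
  refine ⟨(classMatrix_isSymm k).submatrix _, fun i j hij => ?_⟩
  have ha : (4 * k + 1 : ℝ) ≠ 0 := by positivity
  have hb' : (4 * k - 1 : ℝ) ≠ 0 := by
    rw [sub_ne_zero]
    exact_mod_cast (by omega : 4 * k ≠ 1)
  have hij' : (i : ℕ) ≠ j := Fin.val_ne_of_ne hij
  simp only [witnessMatrix, Matrix.submatrix_apply, ThresholdGraph, hb, Fin.lt_def, ne_eq, hij,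
    not_false_eq_true, true_and]
  rcases vertexClass_cases k i.2 with
    ⟨hi, hci⟩ | ⟨hi, hci⟩ | ⟨hi, hci⟩ | ⟨hi, hi', hci⟩ | ⟨hi, hci⟩ <;>
  rcases vertexClass_cases k j.2 with
    ⟨hj, hcj⟩ | ⟨hj, hcj⟩ | ⟨hj, hcj⟩ | ⟨hj, hj', hcj⟩ | ⟨hj, hcj⟩ <;>
  simp [hci, hcj, classMatrix, ha, hb'] <;> omega

theorem three_le_numEig_threshold (hk : 1 ≤ k)
    (hb : ∀ i, b i = true ↔ (i : ℕ) = 2 ∨ (i : ℕ) = k + 3)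
    {A : Matrix (Fin (k + 4)) (Fin (k + 4)) ℝ} (hA : A ∈ SMat (ThresholdGraph b)) :
    3 ≤ numEig A := by
  refine three_le_numEig_of_unique_common_neighbor hA (i := 0) (j := ⟨3, by omega⟩)
    (w := Fin.last _) ?_ ?_ ?_ ?_ fun t => ?_ <;>
  simp only [ThresholdGraph, hb, Fin.lt_def, ne_eq, Fin.ext_iff, Fin.val_last, Fin.val_zero,
    or_true, and_true] <;>
  omega

end ThresholdWitness

theorem qGraph_threshold {k n : ℕ} (hk : 1 ≤ k) (hn : n = k + 4) {b : Fin n → Bool}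
    (hb : ∀ i, b i = true ↔ (i : ℕ) = 2 ∨ (i : ℕ) = k + 3) : qGraph (ThresholdGraph b) = 3 := by
  subst hn
  have hB := witnessMatrix_mem_SMat hb
  refine IsLeast.csInf_eq ⟨⟨witnessMatrix k, hB, ?_⟩, ?_⟩
  · exact le_antisymm (numEig_witnessMatrix_le k) (three_le_numEig_threshold hk hb hB)
  · rintro _ ⟨A, hA, rfl⟩
    exact three_le_numEig_threshold hk hb hA

theorem getElem_creationSeq_eq_true_iff (k m : ℕ)
    (hm : m < ([false, false, true] ++ List.replicate k false ++ [true]).length) :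
    ([false, false, true] ++ List.replicate k false ++ [true])[m] = true ↔ m = 2 ∨ m = k + 3 := by
  simp only [List.length_append, List.length_cons, List.length_replicate, List.length_nil] at hm
  simp only [List.getElem_append, List.length_append, List.length_cons, List.length_replicate,
    List.length_nil, List.getElem_replicate]
  split_ifs
  · interval_cases m <;> simp
  · simp only [false_iff, not_or]
    omega
  · simp only [List.getElem_singleton, true_iff]
    omega

/-- For `G ≅ (0, 0, 1, 0^{k}, 1)` with `k ≥ 1`, `q(G) = 3`. -/
theorem stmt8 (k : ℕ) (hk : 1 ≤ k) :
    qGraph (thresholdOfList ([false, false, true] ++ List.replicate k false ++ [true])) = 3 :=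
  qGraph_threshold (b := List.get _) hk (by simp) fun i => getElem_creationSeq_eq_true_iff k i i.2
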